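/- Let $0 \to A \to B \to C \to 0$ and $0 \to A \to B' \to C' \to 0$ be short exact sequences of modules over a ring $R$ with a morphism of short exact sequences from the first to the second that is the identity on $A$. If an additive derived-functor long exact sequence gives isomorphisms $H^i(B') \cong H^i(C')$ for all $i > 0$, and the map $C \to C'$ admits a retraction, then $H^i(B) \cong H^i(C)$ being an isomorphism for all $i>0$ implies the map $H^i(B) \to H^i(B')$ admits a retraction for all $i > 0$. -/

import Mathlib

open CategoryTheory

/- Applying `H^i` to the square `β ≫ g' = g ≫ γ`, the map `H^i(g)` is invertible and
`H^i(γ)` split mono, so `H^i(g') ≫ H^i(r) ≫ H^i(g)⁻¹` is a retraction of `H^i(β)`. -/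

theorem CategoryTheory.CommSq.isSplitMono_left {C : Type*} [Category C] {X Y Z W : C}
    {β : X ⟶ Y} {g : X ⟶ Z} {g' : Y ⟶ W} {γ : Z ⟶ W} (sq : CommSq β g g' γ)
    [IsIso g] [IsSplitMono γ] : IsSplitMono β :=
  IsSplitMono.mk' ⟨g' ≫ retraction γ ≫ inv g, by
    rw [← Category.assoc, sq.w, Category.assoc, IsSplitMono.id_assoc, IsIso.hom_inv_id]⟩

theorem stmt_5_general (R : Type) [CommRing R]
    (B C B' C' : ModuleCat.{0} R)
    (g : B ⟶ C) (g' : B' ⟶ C')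
    -- morphism of short exact sequences, restricting to the identity on `A`
    (β : B ⟶ B') (γ : C ⟶ C')
    (hcomm₂ : β ≫ g' = g ≫ γ)
    -- the derived functor data
    (F : ModuleCat.{0} R ⥤ AddCommGrpCat.{0}) [F.Additive]
    -- `C → C'` admits a retraction
    (hretr : ∃ r : C' ⟶ C, γ ≫ r = 𝟙 C)
    -- `H^i(B) → H^i(C)` is an isomorphism for all `i > 0`
    (hiso : ∀ i > 0, IsIso ((F.rightDerived i).map g)) :
    ∀ i > 0, ∃ ρ : (F.rightDerived i).obj B' ⟶ (F.rightDerived i).obj B,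
      (F.rightDerived i).map β ≫ ρ = 𝟙 ((F.rightDerived i).obj B) := by
  intro i hi
  obtain ⟨r, hr⟩ := hretr
  have : IsSplitMono γ := IsSplitMono.mk' ⟨r, hr⟩
  have := hiso i hi
  have : IsSplitMono ((F.rightDerived i).map β) :=
    ((F.rightDerived i).map_commSq (CommSq.mk hcomm₂)).isSplitMono_left
  exact ⟨retraction _, IsSplitMono.id _⟩

/-- Two short exact sequences `0 → A → B → C → 0` and `0 → A → B' → C' → 0` of
`R`-modules with a morphism of short exact sequences (identity on `A`); `H^i` are the
right derived functors of a left exact additive functor `F`.  If `H^i(B') → H^i(C')` is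
an isomorphism for all `i > 0`, the map `C → C'` admits a retraction, and
`H^i(B) → H^i(C)` is an isomorphism for all `i > 0`, then `H^i(B) → H^i(B')` admits a
retraction for all `i > 0`. -/
theorem stmt_5 (R : Type) [CommRing R]
    (A B C B' C' : ModuleCat.{0} R)
    (f : A ⟶ B) (g : B ⟶ C) (f' : A ⟶ B') (g' : B' ⟶ C')
    (hf : Function.Injective f) (hg : Function.Surjective g)
    (hfg : Function.Exact f g)
    (hf' : Function.Injective f') (hg' : Function.Surjective g')
    (hfg' : Function.Exact f' g')
    -- morphism of short exact sequences, restricting to the identity on `A`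
    (β : B ⟶ B') (γ : C ⟶ C')
    (hcomm₁ : f ≫ β = f') (hcomm₂ : β ≫ g' = g ≫ γ)
    -- the derived functor data
    (F : ModuleCat.{0} R ⥤ AddCommGrpCat.{0}) [F.Additive] [Limits.PreservesFiniteLimits F]
    -- the long exact sequence gives isomorphisms `H^i(B') ≅ H^i(C')` for `i > 0`
    (hiso' : ∀ i > 0, IsIso ((F.rightDerived i).map g'))
    -- `C → C'` admits a retraction
    (hretr : ∃ r : C' ⟶ C, γ ≫ r = 𝟙 C)
    -- `H^i(B) → H^i(C)` is an isomorphism for all `i > 0`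
    (hiso : ∀ i > 0, IsIso ((F.rightDerived i).map g)) :
    ∀ i > 0, ∃ ρ : (F.rightDerived i).obj B' ⟶ (F.rightDerived i).obj B,
      (F.rightDerived i).map β ≫ ρ = 𝟙 ((F.rightDerived i).obj B) :=
  stmt_5_general R B C B' C' g g' β γ hcomm₂ F hretr hiso
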